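/- arXiv:1205.2349 — 2 statements merged into one kernel-verified Lean document; each statement's English description precedes it below -/
import Mathlib

section
/- Let φ be a nonnegative kernel with ∫φ = 1, first moment m₁ = ∫|z|φ(z)dz and second moment m₂ = ∫z²φ(z)dz both finite. Let u be C¹ with |u'| ≤ M' on ℝ. Then for all A, B > 0, ∫_{-A}^{B} ((u - φ*u)(x))² dx ≤ m₂ ∫_{-A}^{B} (u'(x))² dx + m₂ m₁ (M')². -/
/-!
Writing `u x - u (x - y) = y * ∫₀¹ u' (x - t y) dt` and using `∫ φ = 1`, the difference
`u - φ * u` at `x` is `∫ y (∫₀¹ u' (x - t y) dt) φ y dy`. Cauchy–Schwarz, first in `y` against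
`φ` and then in `t`, bounds its square by `m₂ ∫ (∫₀¹ u' (x - t y)² dt) φ y dy`. After
integrating over `x ∈ [-A, B]` and exchanging the integrals, the shifted integral
`∫_{-A}^{B} u' (x - t y)² dx` differs from `∫_{-A}^{B} u'²` only by two end pieces of length
`|t y| ≤ |y|`, so it exceeds it by at most `|y| M'²`; integrating that against `φ` gives `m₁ M'²`.
-/

open MeasureTheory

section CauchySchwarz

variable {α : Type*} [MeasurableSpace α] {μ : Measure α}

theorem sq_integral_mul_le {f g : α → ℝ} (hf : MemLp f 2 μ) (hg : MemLp g 2 μ) :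
    (∫ x, f x * g x ∂μ) ^ 2 ≤ (∫ x, f x ^ 2 ∂μ) * ∫ x, g x ^ 2 ∂μ := by
  have inner_toLp : ∀ {f g : α → ℝ} (hf : MemLp f 2 μ) (hg : MemLp g 2 μ),
      inner ℝ (hf.toLp f) (hg.toLp g) = ∫ x, f x * g x ∂μ := by
    intro f g hf hg
    rw [L2.inner_def]
    refine integral_congr_ae ?_
    filter_upwards [hf.coeFn_toLp, hg.coeFn_toLp] with x hfx hgx
    simp [hfx, hgx, mul_comm]
  have := real_inner_mul_inner_self_le (hf.toLp f) (hg.toLp g)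
  simpa only [inner_toLp, sq] using this

theorem sq_integral_mul_mul_le {f g w : α → ℝ} (hw : 0 ≤ w) (hf : AEStronglyMeasurable f μ)
    (hg : AEStronglyMeasurable g μ) (hwm : AEStronglyMeasurable w μ)
    (hfw : Integrable (fun x => f x ^ 2 * w x) μ) (hgw : Integrable (fun x => g x ^ 2 * w x) μ) :
    (∫ x, f x * g x * w x ∂μ) ^ 2 ≤ (∫ x, f x ^ 2 * w x ∂μ) * ∫ x, g x ^ 2 * w x ∂μ := by
  have hsq : ∀ (h : α → ℝ) x, (h x * √(w x)) ^ 2 = h x ^ 2 * w x := fun h x => by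
    rw [mul_pow, Real.sq_sqrt (hw x)]
  have hmem : ∀ {h : α → ℝ}, AEStronglyMeasurable h μ → Integrable (fun x => h x ^ 2 * w x) μ →
      MemLp (fun x => h x * √(w x)) 2 μ := fun hh hhw =>
    (memLp_two_iff_integrable_sq
      (hh.mul (Real.continuous_sqrt.comp_aestronglyMeasurable hwm))).mpr
      (by simpa only [Pi.mul_apply, hsq] using hhw)
  have := sq_integral_mul_le (hmem hf hfw) (hmem hg hgw)
  simp only [hsq] at this
  convert this using 4 with x
  rw [mul_mul_mul_comm, Real.mul_self_sqrt (hw x)]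

end CauchySchwarz

theorem sq_intervalIntegral_le {f : ℝ → ℝ} (hf : Continuous f) {a b : ℝ} (hab : a ≤ b) :
    (∫ t in a..b, f t) ^ 2 ≤ (b - a) * ∫ t in a..b, f t ^ 2 := by
  have hmem : MemLp f 2 (volume.restrict (Set.Ioc a b)) :=
    (memLp_two_iff_integrable_sq hf.aestronglyMeasurable).mpr (hf.pow 2).integrableOn_Ioc
  have := sq_integral_mul_le hmem (memLp_const 1)
  simpa [intervalIntegral.integral_of_le hab, hab, mul_comm] using this

theorem intervalIntegral_comp_sub_le {g : ℝ → ℝ} {C : ℝ} (hg : Continuous g) (hg0 : 0 ≤ g)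
    (hgC : ∀ z, g z ≤ C) (a b c : ℝ) :
    ∫ x in a..b, g (x - c) ≤ (∫ x in a..b, g x) + |c| * C := by
  have hii : ∀ p q, IntervalIntegrable g volume p q := hg.intervalIntegrable
  have hle : ∀ p q, p ≤ q → ∫ x in p..q, g x ≤ (q - p) * C := fun p q hpq => by
    simpa using intervalIntegral.integral_mono_on hpq (hii p q) intervalIntegrable_const
      fun x _ => hgC x
  have hnn : ∀ p q, p ≤ q → 0 ≤ ∫ x in p..q, g x := fun p q hpq =>
    intervalIntegral.integral_nonneg hpq fun x _ => hg0 x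
  rw [intervalIntegral.integral_comp_sub_right,
    ← intervalIntegral.integral_add_adjacent_intervals (hii (a - c) a) (hii a (b - c)),
    ← intervalIntegral.integral_add_adjacent_intervals (hii a b) (hii b (b - c))]
  rcases le_total 0 c with hc | hc
  · have := hle (a - c) a (by linarith)
    have := hnn (b - c) b (by linarith)
    rw [intervalIntegral.integral_symm (b - c) b, abs_of_nonneg hc]
    linarith
  · have := hnn a (a - c) (by linarith)
    have := hle b (b - c) (by linarith)
    rw [intervalIntegral.integral_symm a (a - c), abs_of_nonpos hc]
    linarith

noncomputable def segmentAverage (g : ℝ → ℝ) (x y : ℝ) : ℝ :=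
  ∫ t in (0 : ℝ)..1, g (x - t * y)

section SegmentAverage

variable {g : ℝ → ℝ} {C : ℝ}

theorem continuous_segmentAverage (hg : Continuous g) :
    Continuous fun p : ℝ × ℝ => segmentAverage g p.1 p.2 :=
  intervalIntegral.continuous_parametric_intervalIntegral_of_continuous' (by fun_prop) 0 1

theorem segmentAverage_nonneg (hg0 : 0 ≤ g) (x y : ℝ) : 0 ≤ segmentAverage g x y :=
  intervalIntegral.integral_nonneg zero_le_one fun _ _ => hg0 _

theorem segmentAverage_le (hg : Continuous g) (hgC : ∀ z, g z ≤ C) (x y : ℝ) :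
    segmentAverage g x y ≤ C := by
  simpa [segmentAverage] using intervalIntegral.integral_mono_on zero_le_one
    ((by fun_prop : Continuous fun t => g (x - t * y)).intervalIntegrable 0 1)
    (intervalIntegrable_const (μ := volume)) fun t _ => hgC (x - t * y)

theorem sq_segmentAverage_le (hg : Continuous g) (x y : ℝ) :
    segmentAverage g x y ^ 2 ≤ segmentAverage (fun z => g z ^ 2) x y := by
  simpa [segmentAverage] using
    sq_intervalIntegral_le (f := fun t => g (x - t * y)) (by fun_prop) zero_le_one

theorem sub_eq_mul_segmentAverage_deriv {u : ℝ → ℝ} (hu : ContDiff ℝ 1 u) (x y : ℝ) :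
    u x - u (x - y) = y * segmentAverage (deriv u) x y := by
  have := intervalIntegral.integral_unitInterval_deriv_eq_sub (f := u) (f' := deriv u)
    (z₀ := x) (z₁ := -y)
    ((hu.continuous_deriv le_rfl).comp (by fun_prop)).continuousOn
    fun t _ => (hu.differentiable one_ne_zero _).hasDerivAt
  simp only [smul_eq_mul, mul_neg, ← sub_eq_add_neg] at this
  rw [segmentAverage]
  linarith

theorem intervalIntegral_segmentAverage_le (hg : Continuous g) (hg0 : 0 ≤ g)
    (hgC : ∀ z, g z ≤ C) (a b y : ℝ) :
    ∫ x in a..b, segmentAverage g x y ≤ (∫ x in a..b, g x) + |y| * C := by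
  have hC : 0 ≤ C := (hg0 0).trans (hgC 0)
  have hcont : Continuous (Function.uncurry fun x t => g (x - t * y)) := by fun_prop
  simp only [segmentAverage]
  rw [intervalIntegral_intervalIntegral_swap
    ((hcont.continuousOn.integrableOn_compact (isCompact_uIcc.prod isCompact_uIcc)).mono_set
      (Set.prod_mono Set.uIoc_subset_uIcc Set.uIoc_subset_uIcc))]
  calc ∫ t in (0 : ℝ)..1, ∫ x in a..b, g (x - t * y)
      ≤ ∫ t in (0 : ℝ)..1, ((∫ x in a..b, g x) + |y| * C) := by
        refine intervalIntegral.integral_mono_on zero_le_one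
          ((intervalIntegral.continuous_parametric_intervalIntegral_of_continuous'
            (f := fun t x => g (x - t * y)) (by fun_prop) a b).intervalIntegrable 0 1)
          intervalIntegrable_const fun t ht => ?_
        have hty : |t * y| ≤ |y| := by
          rw [abs_mul, abs_of_nonneg ht.1]
          exact mul_le_of_le_one_left (abs_nonneg y) ht.2
        exact (intervalIntegral_comp_sub_le hg hg0 hgC a b (t * y)).trans (by gcongr)
    _ = (∫ x in a..b, g x) + |y| * C := by simp

theorem integrable_segmentAverage_mul (hg : Continuous g) (hg0 : 0 ≤ g) (hgC : ∀ z, g z ≤ C)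
    {φ : ℝ → ℝ} (hφ : Integrable φ) (x : ℝ) :
    Integrable fun y => segmentAverage g x y * φ y :=
  hφ.bdd_mul ((continuous_segmentAverage hg).comp (Continuous.prodMk_right x)).aestronglyMeasurable
    (ae_of_all _ fun y => by
      rw [Real.norm_of_nonneg (segmentAverage_nonneg hg0 _ _)]
      exact segmentAverage_le hg hgC x y)

theorem integrable_segmentAverage_mul_prod (hg : Continuous g) (hg0 : 0 ≤ g)
    (hgC : ∀ z, g z ≤ C) {φ : ℝ → ℝ} (hφ : Integrable φ) (μ : Measure ℝ) [IsFiniteMeasure μ] :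
    Integrable (Function.uncurry fun x y => segmentAverage g x y * φ y) (μ.prod volume) :=
  (hφ.comp_snd μ).bdd_mul (continuous_segmentAverage hg).aestronglyMeasurable
    (ae_of_all _ fun p => by
      rw [Real.norm_of_nonneg (segmentAverage_nonneg hg0 _ _)]
      exact segmentAverage_le hg hgC _ _)

theorem intervalIntegral_integral_segmentAverage_mul_le (hg : Continuous g) (hg0 : 0 ≤ g)
    (hgC : ∀ z, g z ≤ C) {φ : ℝ → ℝ} (hφ0 : 0 ≤ φ) (hφ : Integrable φ) (hφ1 : ∫ z, φ z = 1)
    (hφm1 : Integrable fun z => |z| * φ z) {a b : ℝ} (hab : a ≤ b) :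
    ∫ x in a..b, ∫ y, segmentAverage g x y * φ y
      ≤ (∫ x in a..b, g x) + C * ∫ z, |z| * φ z := by
  have hint : Integrable (fun y => (∫ x in a..b, g x) * φ y + C * (|y| * φ y)) :=
    (hφ.const_mul _).add (hφm1.const_mul C)
  rw [intervalIntegral_integral_swap (by
    rw [Set.uIoc_of_le hab]; exact integrable_segmentAverage_mul_prod hg hg0 hgC hφ _)]
  calc ∫ y, ∫ x in a..b, segmentAverage g x y * φ y
      ≤ ∫ y, ((∫ x in a..b, g x) * φ y + C * (|y| * φ y)) := by
        refine integral_mono_of_nonneg (ae_of_all _ fun y => ?_) hint (ae_of_all _ fun y => ?_)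
        · exact intervalIntegral.integral_nonneg hab fun x _ =>
            mul_nonneg (segmentAverage_nonneg hg0 x y) (hφ0 y)
        · dsimp only
          rw [intervalIntegral.integral_mul_const, ← mul_assoc, ← add_mul]
          exact mul_le_mul_of_nonneg_right
            (intervalIntegral_segmentAverage_le hg hg0 hgC a b y |>.trans_eq (by ring)) (hφ0 y)
    _ = (∫ x in a..b, g x) + C * ∫ z, |z| * φ z := by
        rw [integral_add (hφ.const_mul _) (hφm1.const_mul C), integral_const_mul,
          integral_const_mul, hφ1, mul_one]

end SegmentAverage

theorem sub_integral_comp_sub_mul_eq {u φ : ℝ → ℝ} (hu : ContDiff ℝ 1 u) (hφ : Integrable φ)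
    (hφ1 : ∫ z, φ z = 1) (x : ℝ)
    (hint : Integrable fun y => y * segmentAverage (deriv u) x y * φ y) :
    u x - ∫ y, u (x - y) * φ y = ∫ y, y * segmentAverage (deriv u) x y * φ y := by
  have : ∀ y, u (x - y) * φ y = u x * φ y - y * segmentAverage (deriv u) x y * φ y := fun y => by
    rw [← sub_eq_mul_segmentAverage_deriv hu]; ring
  simp_rw [this]
  rw [integral_sub (hφ.const_mul _) hint, integral_const_mul, hφ1]
  ring

theorem sq_sub_integral_comp_sub_mul_le {u φ : ℝ → ℝ} (hu : ContDiff ℝ 1 u) {C : ℝ}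
    (hgC : ∀ z, deriv u z ^ 2 ≤ C) (hφ0 : 0 ≤ φ) (hφ : Integrable φ) (hφ1 : ∫ z, φ z = 1)
    (hφm2 : Integrable fun z => z ^ 2 * φ z) (x : ℝ) :
    (u x - ∫ y, u (x - y) * φ y) ^ 2
      ≤ (∫ z, z ^ 2 * φ z) * ∫ y, segmentAverage (fun z => deriv u z ^ 2) x y * φ y := by
  have hu' : Continuous (deriv u) := hu.continuous_deriv le_rfl
  have hg : Continuous fun z => deriv u z ^ 2 := hu'.pow 2
  set w := fun y => segmentAverage (deriv u) x y
  have hw : Continuous w := (continuous_segmentAverage hu').comp (Continuous.prodMk_right x)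
  have hw2 : ∀ y, w y ^ 2 ≤ segmentAverage (fun z => deriv u z ^ 2) x y :=
    sq_segmentAverage_le hu' x
  have hWφ : Integrable fun y => segmentAverage (fun z => deriv u z ^ 2) x y * φ y :=
    integrable_segmentAverage_mul hg (fun z => sq_nonneg _) hgC hφ x
  have hw2φ : Integrable fun y => w y ^ 2 * φ y :=
    hWφ.mono' ((hw.pow 2).aestronglyMeasurable.mul hφ.aestronglyMeasurable)
      (ae_of_all _ fun y => by
        rw [Real.norm_of_nonneg (mul_nonneg (sq_nonneg _) (hφ0 y))]
        exact mul_le_mul_of_nonneg_right (hw2 y) (hφ0 y))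
  have hywφ : Integrable fun y => y * w y * φ y :=
    (hφm2.add hw2φ).mono'
      ((continuous_id.mul hw).aestronglyMeasurable.mul hφ.aestronglyMeasurable)
      (ae_of_all _ fun y => by
        rw [Real.norm_eq_abs, abs_mul, abs_mul, abs_of_nonneg (hφ0 y), Pi.add_apply, ← add_mul]
        exact mul_le_mul_of_nonneg_right
          (by nlinarith [sq_nonneg (|y| - |w y|), sq_abs y, sq_abs (w y)]) (hφ0 y))
  rw [sub_integral_comp_sub_mul_eq hu hφ hφ1 x hywφ]
  calc (∫ y, y * w y * φ y) ^ 2 ≤ (∫ y, y ^ 2 * φ y) * ∫ y, w y ^ 2 * φ y :=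
        sq_integral_mul_mul_le hφ0 aestronglyMeasurable_id hw.aestronglyMeasurable
          hφ.aestronglyMeasurable hφm2 hw2φ
    _ ≤ (∫ z, z ^ 2 * φ z) * ∫ y, segmentAverage (fun z => deriv u z ^ 2) x y * φ y :=
        mul_le_mul_of_nonneg_left
          (integral_mono hw2φ hWφ fun y => mul_le_mul_of_nonneg_right (hw2 y) (hφ0 y))
          (integral_nonneg fun z => mul_nonneg (sq_nonneg z) (hφ0 z))

theorem stmt_2_general (φ u : ℝ → ℝ)
    (hφ0 : ∀ z, 0 ≤ φ z)
    (hφint : Integrable φ) (hφ1 : ∫ z, φ z = 1)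
    (m₁ m₂ : ℝ)
    (hφm1 : Integrable (fun z => |z| * φ z)) (hm1 : m₁ = ∫ z, |z| * φ z)
    (hφm2 : Integrable (fun z => z ^ 2 * φ z)) (hm2 : m₂ = ∫ z, z ^ 2 * φ z)
    (hu : ContDiff ℝ 1 u)
    (M' : ℝ) (hM' : ∀ x, |deriv u x| ≤ M')
    (A B : ℝ) (hA : 0 < A) (hB : 0 < B) :
    ∫ x in (-A)..B, (u x - ∫ y, u (x - y) * φ y) ^ 2
      ≤ m₂ * (∫ x in (-A)..B, (deriv u x) ^ 2) + m₂ * m₁ * M' ^ 2 := by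
  have hAB : -A ≤ B := by linarith
  have hg : Continuous fun z => deriv u z ^ 2 := (hu.continuous_deriv le_rfl).pow 2
  have hg0 : 0 ≤ fun z => deriv u z ^ 2 := fun z => sq_nonneg _
  have hgC : ∀ z, deriv u z ^ 2 ≤ M' ^ 2 := fun z =>
    sq_le_sq' (abs_le.mp (hM' z)).1 (abs_le.mp (hM' z)).2
  have hm₂ : 0 ≤ m₂ := hm2 ▸ integral_nonneg fun z => mul_nonneg (sq_nonneg z) (hφ0 z)
  set F := fun x => ∫ y, segmentAverage (fun z => deriv u z ^ 2) x y * φ y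
  have hF : IntegrableOn F (Set.Ioc (-A) B) :=
    (integrable_segmentAverage_mul_prod hg hg0 hgC hφint _).integral_prod_left
  calc ∫ x in (-A)..B, (u x - ∫ y, u (x - y) * φ y) ^ 2 ≤ ∫ x in (-A)..B, m₂ * F x := by
        simp only [intervalIntegral.integral_of_le hAB]
        refine integral_mono_of_nonneg (ae_of_all _ fun _ => sq_nonneg _) (hF.const_mul m₂)
          (ae_of_all _ fun x => ?_)
        exact hm2 ▸ sq_sub_integral_comp_sub_mul_le hu hgC hφ0 hφint hφ1 hφm2 x
    _ = m₂ * ∫ x in (-A)..B, F x := intervalIntegral.integral_const_mul _ _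
    _ ≤ m₂ * ((∫ x in (-A)..B, deriv u x ^ 2) + M' ^ 2 * m₁) := by
        rw [hm1]
        exact mul_le_mul_of_nonneg_left (intervalIntegral_integral_segmentAverage_mul_le
          hg hg0 hgC hφ0 hφint hφ1 hφm1 hAB) hm₂
    _ = m₂ * (∫ x in (-A)..B, (deriv u x) ^ 2) + m₂ * m₁ * M' ^ 2 := by ring

/-- L² bound on [-A,B] for u - φ*u. -/
theorem stmt_2 (φ u : ℝ → ℝ)
    (hφc : Continuous φ) (hφ0 : ∀ z, 0 ≤ φ z)
    (hφint : Integrable φ) (hφ1 : ∫ z, φ z = 1)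
    (m₁ m₂ : ℝ)
    (hφm1 : Integrable (fun z => |z| * φ z)) (hm1 : m₁ = ∫ z, |z| * φ z)
    (hφm2 : Integrable (fun z => z ^ 2 * φ z)) (hm2 : m₂ = ∫ z, z ^ 2 * φ z)
    (hu : ContDiff ℝ 1 u)
    (M M' : ℝ) (hM : ∀ x, |u x| ≤ M) (hM' : ∀ x, |deriv u x| ≤ M')
    (A B : ℝ) (hA : 0 < A) (hB : 0 < B) :
    ∫ x in (-A)..B, (u x - ∫ y, u (x - y) * φ y) ^ 2
      ≤ m₂ * (∫ x in (-A)..B, (deriv u x) ^ 2) + m₂ * m₁ * M' ^ 2 :=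
  stmt_2_general φ u hφ0 hφint hφ1 m₁ m₂ hφm1 hm1 hφm2 hm2 hu M' hM' A B hA hB
end

section
/- Let c ∈ ℝ, c ≠ 0, and let u ∈ C²_b(ℝ) solve -c u' = u'' + μ u (1 - φ*u) on ℝ, where φ is a nonnegative kernel with ∫φ = 1 and finite first and second moments m₁, m₂. If μ √m₂ ‖u‖_∞ < |c|, then u' ∈ L²(ℝ). -/
/-!
Multiply the equation by `u'` and integrate over `[-R, R]`. The local terms are the derivative
of the bounded energy `u'²/2 + μ (u²/2 - u³/3)`, so with `I R = ∫_{-R}^{R} u'²` and a constant `C`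
one gets `|c| I R ≤ C + μ ‖u‖ ∫_{-R}^{R} |u'(x)| ∫ |u x - u (x - y)| φ y dy dx`.
Swapping the integrals, Cauchy–Schwarz in `x` and the bound
`∫_{-R}^{R} (u x - u (x - y))² ≤ y² (I R + 2 |y| ‖u'‖²)` estimate the double integral for fixed `y`,
and Cauchy–Schwarz against `φ` in `y` bounds it by `√m₂ √(I R) √(I R + 2 m₁ ‖u'‖²)`.
Since `μ √m₂ ‖u‖ < |c|`, the resulting inequality bounds `I R` uniformly in `R`.
-/

open MeasureTheory Set Filter

theorem integral_mul_le_sqrt_mul_sqrt {α : Type*} [MeasurableSpace α] {ν : Measure α}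
    {f g : α → ℝ} (hf0 : 0 ≤ᵐ[ν] f) (hg0 : 0 ≤ᵐ[ν] g) (hf : MemLp f 2 ν) (hg : MemLp g 2 ν) :
    ∫ a, f a * g a ∂ν ≤ √(∫ a, f a ^ 2 ∂ν) * √(∫ a, g a ^ 2 ∂ν) := by
  have h := integral_mul_le_Lp_mul_Lq_of_nonneg Real.HolderConjugate.two_two hf0 hg0
    (by simpa using hf) (by simpa using hg)
  simpa [Real.sqrt_eq_rpow] using h

theorem le_of_mul_le_add_mul_sqrt_mul_sqrt {x A B D γ : ℝ} (hx : 0 ≤ x) (hB : 0 ≤ B)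
    (hD : 0 ≤ D) (hBγ : B < γ) (h : γ * x ≤ A + B * (√x * √(x + D))) :
    x ≤ (2 * (γ - B) * A + B ^ 2 * D) / (γ - B) ^ 2 := by
  have hsum : √(x + D) ≤ √x + √D := by
    rw [Real.sqrt_le_left (by positivity)]
    nlinarith [Real.sq_sqrt hx, Real.sq_sqrt hD, Real.sqrt_nonneg x, Real.sqrt_nonneg D]
  have hlin : (γ - B) * x ≤ A + B * √D * √x := by
    nlinarith [Real.mul_self_sqrt hx, mul_le_mul_of_nonneg_left hsum
      (mul_nonneg hB (Real.sqrt_nonneg x))]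
  rw [le_div_iff₀ (by nlinarith)]
  nlinarith [sq_nonneg ((γ - B) * √x - B * √D), Real.sq_sqrt hx, Real.sq_sqrt hD,
    mul_le_mul_of_nonneg_left hlin (sub_nonneg.2 hBγ.le)]

theorem intervalIntegral_sq_le_add_of_abs_le {g : ℝ → ℝ} {a b r K : ℝ} (hg : Continuous g)
    (hK : ∀ x, |g x| ≤ K) (hr : 0 ≤ r) :
    ∫ x in (a - r)..(b + r), g x ^ 2 ≤ (∫ x in a..b, g x ^ 2) + 2 * r * K ^ 2 := by
  have hi : ∀ c d, IntervalIntegrable (fun x => g x ^ 2) volume c d :=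
    fun c d => (hg.pow 2).intervalIntegrable c d
  have hpiece : ∀ c d, ‖∫ x in c..d, g x ^ 2‖ ≤ K ^ 2 * |d - c| := fun c d =>
    intervalIntegral.norm_integral_le_of_norm_le_const fun x _ => by
      simpa [abs_pow] using pow_le_pow_left₀ (abs_nonneg _) (hK x) 2
  rw [← intervalIntegral.integral_add_adjacent_intervals (hi _ a) (hi a _),
    ← intervalIntegral.integral_add_adjacent_intervals (hi a b) (hi b _)]
  have h1 := (abs_le.1 (Real.norm_eq_abs _ ▸ hpiece (a - r) a)).2
  have h2 := (abs_le.1 (Real.norm_eq_abs _ ▸ hpiece b (b + r))).2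
  rw [show a - (a - r) = r by ring, abs_of_nonneg hr] at h1
  rw [show b + r - b = r by ring, abs_of_nonneg hr] at h2
  linarith

theorem sq_intervalIntegral_zero_one_le {h : ℝ → ℝ} (hh : Continuous h) :
    (∫ t in (0:ℝ)..1, h t) ^ 2 ≤ ∫ t in (0:ℝ)..1, h t ^ 2 := by
  set m := ∫ t in (0:ℝ)..1, h t
  have hvar : ∫ t in (0:ℝ)..1, (h t - m) ^ 2 = (∫ t in (0:ℝ)..1, h t ^ 2) - m ^ 2 := by
    have e : ∀ t, (h t - m) ^ 2 = h t ^ 2 - 2 * m * h t + m ^ 2 := fun t => by ring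
    simp_rw [e]
    rw [intervalIntegral.integral_add, intervalIntegral.integral_sub,
      intervalIntegral.integral_const_mul]
    · simp only [intervalIntegral.integral_const, sub_zero, one_smul]; ring
    all_goals exact Continuous.intervalIntegrable (by fun_prop) _ _
  have := intervalIntegral.integral_nonneg (μ := volume) zero_le_one
    (fun t _ => sq_nonneg (h t - m))
  linarith

theorem sq_sub_comp_sub_le_mul_intervalIntegral {f f' : ℝ → ℝ} (hf : ∀ x, HasDerivAt f (f' x) x)
    (hf' : Continuous f') (x y : ℝ) :
    (f x - f (x - y)) ^ 2 ≤ y ^ 2 * ∫ t in (0:ℝ)..1, f' (x - t * y) ^ 2 := by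
  have hftc : ∫ t in (0:ℝ)..1, y * f' (x - t * y) = f x - f (x - y) := by
    have := intervalIntegral.integral_eq_sub_of_hasDerivAt
      (f := fun t => - f (x - t * y)) (f' := fun t => y * f' (x - t * y)) (a := 0) (b := 1)
      (fun t _ => by
        convert ((hf (x - t * y)).comp t (((hasDerivAt_id t).mul_const y).const_sub x)).neg
          using 1
        · ext; simp
        · ring)
      (Continuous.intervalIntegrable (by fun_prop) _ _)
    simpa [sub_eq_neg_add, add_comm] using this
  calc (f x - f (x - y)) ^ 2 ≤ ∫ t in (0:ℝ)..1, (y * f' (x - t * y)) ^ 2 :=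
        hftc ▸ sq_intervalIntegral_zero_one_le (by fun_prop)
    _ = y ^ 2 * ∫ t in (0:ℝ)..1, f' (x - t * y) ^ 2 := by
        simp_rw [mul_pow]; exact intervalIntegral.integral_const_mul _ _

theorem intervalIntegral_sq_sub_comp_sub_le {f f' : ℝ → ℝ} (hf : ∀ x, HasDerivAt f (f' x) x)
    (hf' : Continuous f') {a b : ℝ} (hab : a ≤ b) (y : ℝ) :
    ∫ x in a..b, (f x - f (x - y)) ^ 2 ≤ y ^ 2 * ∫ x in (a - |y|)..(b + |y|), f' x ^ 2 := by
  have hfc : Continuous f := continuous_iff_continuousAt.2 fun x => (hf x).continuousAt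
  have hF : Continuous (Function.uncurry fun x t => f' (x - t * y) ^ 2) := by fun_prop
  have hF' : Continuous (Function.uncurry fun t x => f' (x - t * y) ^ 2) := by fun_prop
  have hshift : ∀ t ∈ Icc (0:ℝ) 1,
      ∫ x in a..b, f' (x - t * y) ^ 2 ≤ ∫ x in (a - |y|)..(b + |y|), f' x ^ 2 := by
    intro t ht
    have hty : |t * y| ≤ |y| := by
      rw [abs_mul, abs_of_nonneg ht.1]; exact mul_le_of_le_one_left (abs_nonneg y) ht.2
    rw [intervalIntegral.integral_comp_sub_right (fun x => f' x ^ 2)]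
    exact intervalIntegral.integral_mono_interval (by linarith [le_abs_self (t * y)])
      (by linarith) (by linarith [neg_abs_le (t * y)])
      (Eventually.of_forall fun x => sq_nonneg _) ((hf'.pow 2).intervalIntegrable _ _)
  calc ∫ x in a..b, (f x - f (x - y)) ^ 2
      ≤ ∫ x in a..b, y ^ 2 * ∫ t in (0:ℝ)..1, f' (x - t * y) ^ 2 :=
        intervalIntegral.integral_mono_on hab (Continuous.intervalIntegrable (by fun_prop) _ _)
          ((continuous_const.mul
            (intervalIntegral.continuous_parametric_intervalIntegral_of_continuous' hF 0 1)
            ).intervalIntegrable _ _)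
          fun x _ => sq_sub_comp_sub_le_mul_intervalIntegral hf hf' x y
    _ = y ^ 2 * ∫ t in (0:ℝ)..1, ∫ x in a..b, f' (x - t * y) ^ 2 := by
        rw [intervalIntegral.integral_const_mul, intervalIntegral_intervalIntegral_swap]
        exact (hF.continuousOn.integrableOn_compact (isCompact_uIcc.prod isCompact_uIcc)).mono_set
          (prod_mono uIoc_subset_uIcc uIoc_subset_uIcc)
    _ ≤ y ^ 2 * ∫ t in (0:ℝ)..1, ∫ x in (a - |y|)..(b + |y|), f' x ^ 2 := by
        gcongr
        exact intervalIntegral.integral_mono_on zero_le_one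
          ((intervalIntegral.continuous_parametric_intervalIntegral_of_continuous'
            hF' a b).intervalIntegrable 0 1) intervalIntegrable_const hshift
    _ = y ^ 2 * ∫ x in (a - |y|)..(b + |y|), f' x ^ 2 := by simp

theorem integral_le_sqrt_moment_mul_sqrt {φ h : ℝ → ℝ} (hφ0 : ∀ y, 0 ≤ φ y)
    (hφ : Integrable φ) (hφ1 : ∫ y, φ y = 1) (hφm1 : Integrable fun y => |y| * φ y)
    (hφm2 : Integrable fun y => y ^ 2 * φ y) {I K : ℝ} (hI : 0 ≤ I) (hK : 0 ≤ K)
    {C : ℝ} (hC : 0 ≤ C) (hh0 : ∀ y, 0 ≤ h y)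
    (hh : ∀ y, h y ≤ C * (φ y * (|y| * √(I + 2 * |y| * K)))) :
    ∫ y, h y ≤ C * (√(∫ y, y ^ 2 * φ y) * √(I + 2 * (∫ y, |y| * φ y) * K)) := by
  set F : ℝ → ℝ := fun y => |y| * √(φ y)
  set G : ℝ → ℝ := fun y => √(φ y) * √(I + 2 * |y| * K)
  have hsqrtφ : AEStronglyMeasurable (fun y => √(φ y)) volume :=
    Real.continuous_sqrt.comp_aestronglyMeasurable hφ.aestronglyMeasurable
  have hF2 : ∀ y, F y ^ 2 = y ^ 2 * φ y := fun y => by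
    simp only [F, mul_pow, sq_abs, Real.sq_sqrt (hφ0 y)]
  have hG2 : ∀ y, G y ^ 2 = I * φ y + 2 * K * (|y| * φ y) := fun y => by
    simp only [G, mul_pow, Real.sq_sqrt (hφ0 y), Real.sq_sqrt (by positivity : 0 ≤ I + 2 * |y| * K)]
    ring
  have hF : MemLp F 2 volume := (memLp_two_iff_integrable_sq
    (continuous_abs.aestronglyMeasurable.mul hsqrtφ)).2
    (hφm2.congr (Eventually.of_forall fun y => (hF2 y).symm))
  have hG : MemLp G 2 volume := (memLp_two_iff_integrable_sq
    (hsqrtφ.mul (by fun_prop : Continuous fun y : ℝ => √(I + 2 * |y| * K)).aestronglyMeasurable)).2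
    (((hφ.const_mul I).add (hφm1.const_mul (2 * K))).congr
      (Eventually.of_forall fun y => (hG2 y).symm))
  have hFG : ∀ y, F y * G y = φ y * (|y| * √(I + 2 * |y| * K)) := fun y => by
    linear_combination (|y| * √(I + 2 * |y| * K)) * Real.mul_self_sqrt (hφ0 y)
  calc ∫ y, h y ≤ ∫ y, C * (F y * G y) :=
        integral_mono_of_nonneg (Eventually.of_forall hh0) ((hF.integrable_mul hG).const_mul C)
          (Eventually.of_forall fun y => (hh y).trans_eq (by simp only [hFG]))
    _ ≤ C * (√(∫ y, F y ^ 2) * √(∫ y, G y ^ 2)) := by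
        rw [integral_const_mul]
        exact mul_le_mul_of_nonneg_left (integral_mul_le_sqrt_mul_sqrt
          (Eventually.of_forall fun y => by positivity)
          (Eventually.of_forall fun y => by positivity) hF hG) hC
    _ = C * (√(∫ y, y ^ 2 * φ y) * √(I + 2 * (∫ y, |y| * φ y) * K)) := by
        simp only [hF2, hG2]
        rw [integral_add (hφ.const_mul I) (hφm1.const_mul (2 * K)), integral_const_mul,
          integral_const_mul, hφ1]
        ring_nf

theorem intervalIntegral_abs_mul_abs_sub_comp_sub_le {f f' : ℝ → ℝ}
    (hf : ∀ x, HasDerivAt f (f' x) x) (hf' : Continuous f') {M' : ℝ} (hM' : ∀ x, |f' x| ≤ M')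
    {a b : ℝ} (hab : a ≤ b) (y : ℝ) :
    ∫ x in a..b, |f' x| * |f x - f (x - y)| ≤
      √(∫ x in a..b, f' x ^ 2) * (|y| * √((∫ x in a..b, f' x ^ 2) + 2 * |y| * M' ^ 2)) := by
  have hfc : Continuous f := continuous_iff_continuousAt.2 fun x => (hf x).continuousAt
  have hL2 : ∀ g : ℝ → ℝ, Continuous g → MemLp g 2 (volume.restrict (Ioc a b)) := fun g hg =>
    (memLp_two_iff_integrable_sq hg.aestronglyMeasurable).2 (hg.pow 2).integrableOn_Ioc
  have hosc : ∫ x in a..b, (f x - f (x - y)) ^ 2 ≤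
      y ^ 2 * ((∫ x in a..b, f' x ^ 2) + 2 * |y| * M' ^ 2) :=
    (intervalIntegral_sq_sub_comp_sub_le hf hf' hab y).trans <| mul_le_mul_of_nonneg_left
      (intervalIntegral_sq_le_add_of_abs_le hf' hM' (abs_nonneg y)) (sq_nonneg y)
  have hCS := integral_mul_le_sqrt_mul_sqrt (Eventually.of_forall fun x => abs_nonneg (f' x))
    (Eventually.of_forall fun x => abs_nonneg (f x - f (x - y))) (hL2 _ hf'.abs)
    (hL2 _ (by fun_prop))
  simp only [sq_abs, ← intervalIntegral.integral_of_le hab] at hCS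
  refine hCS.trans (mul_le_mul_of_nonneg_left ?_ (Real.sqrt_nonneg _))
  calc √(∫ x in a..b, (f x - f (x - y)) ^ 2)
      ≤ √(y ^ 2 * ((∫ x in a..b, f' x ^ 2) + 2 * |y| * M' ^ 2)) := Real.sqrt_le_sqrt hosc
    _ = |y| * √((∫ x in a..b, f' x ^ 2) + 2 * |y| * M' ^ 2) := by
        rw [Real.sqrt_mul (sq_nonneg y), Real.sqrt_sq_eq_abs]

noncomputable def meanOscillation (φ f : ℝ → ℝ) (x : ℝ) : ℝ := ∫ y, |f x - f (x - y)| * φ y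

theorem continuous_meanOscillation {φ f : ℝ → ℝ} (hφ : Integrable φ) (hf : Continuous f) {M : ℝ}
    (hM : ∀ x, |f x| ≤ M) : Continuous (meanOscillation φ f) := by
  refine continuous_of_dominated (bound := fun y => 2 * M * ‖φ y‖)
    (fun x => ((by fun_prop : Continuous fun y => |f x - f (x - y)|).aestronglyMeasurable.mul
      hφ.aestronglyMeasurable)) (fun x => Eventually.of_forall fun y => ?_)
    (hφ.norm.const_mul _) (Eventually.of_forall fun y => by fun_prop)
  rw [norm_mul, Real.norm_eq_abs, abs_abs]
  gcongr
  linarith [abs_sub (f x) (f (x - y)), hM x, hM (x - y)]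

theorem abs_sub_integral_comp_sub_mul_le_meanOscillation {φ f : ℝ → ℝ} (hφ0 : ∀ y, 0 ≤ φ y)
    (hφ : Integrable φ) (hφ1 : ∫ y, φ y = 1) (hf : Continuous f) {M : ℝ} (hM : ∀ x, |f x| ≤ M)
    (x : ℝ) :
    |f x - ∫ y, f (x - y) * φ y| ≤ meanOscillation φ f x := by
  have hint : Integrable fun y => f (x - y) * φ y :=
    (hφ.const_mul M).mono' ((by fun_prop : Continuous fun y => f (x - y)).aestronglyMeasurable.mul
      hφ.aestronglyMeasurable) (Eventually.of_forall fun y => by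
        rw [norm_mul, Real.norm_eq_abs, Real.norm_eq_abs, abs_of_nonneg (hφ0 y)]
        exact mul_le_mul_of_nonneg_right (hM _) (hφ0 y))
  have hsplit : f x - ∫ y, f (x - y) * φ y = ∫ y, (f x - f (x - y)) * φ y := by
    simp_rw [sub_mul]
    rw [integral_sub (hφ.const_mul _) hint, integral_const_mul, hφ1, mul_one]
  rw [hsplit]
  refine (abs_integral_le_integral_abs).trans_eq (integral_congr_ae
    (Eventually.of_forall fun y => ?_))
  simp [abs_mul, abs_of_nonneg (hφ0 y)]

theorem intervalIntegral_abs_mul_meanOscillation_le {φ f f' : ℝ → ℝ} (hφ0 : ∀ y, 0 ≤ φ y)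
    (hφ : Integrable φ) (hφ1 : ∫ y, φ y = 1) (hφm1 : Integrable fun y => |y| * φ y)
    (hφm2 : Integrable fun y => y ^ 2 * φ y) (hf : ∀ x, HasDerivAt f (f' x) x)
    (hf' : Continuous f') {M M' : ℝ} (hM : ∀ x, |f x| ≤ M) (hM' : ∀ x, |f' x| ≤ M')
    {a b : ℝ} (hab : a ≤ b) :
    ∫ x in a..b, |f' x| * meanOscillation φ f x ≤
      √(∫ x in a..b, f' x ^ 2) * (√(∫ y, y ^ 2 * φ y) *
        √((∫ x in a..b, f' x ^ 2) + 2 * (∫ y, |y| * φ y) * M' ^ 2)) := by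
  have hfc : Continuous f := continuous_iff_continuousAt.2 fun x => (hf x).continuousAt
  have hM'0 : 0 ≤ M' := (abs_nonneg _).trans (hM' 0)
  have : IsFiniteMeasure (volume.restrict (uIoc a b)) := by
    rw [uIoc_of_le hab]; infer_instance
  have hprod : Integrable (Function.uncurry fun x y => |f' x| * |f x - f (x - y)| * φ y)
      ((volume.restrict (uIoc a b)).prod volume) := by
    refine Integrable.mono' ((hφ.comp_snd _).const_mul (M' * (2 * M)))
      (((by fun_prop : Continuous fun p : ℝ × ℝ => |f' p.1| * |f p.1 - f (p.1 - p.2)|)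
        ).aestronglyMeasurable.mul hφ.aestronglyMeasurable.comp_snd)
      (Eventually.of_forall fun p => ?_)
    have hΔ : |f p.1 - f (p.1 - p.2)| ≤ 2 * M := by
      linarith [abs_sub (f p.1) (f (p.1 - p.2)), hM p.1, hM (p.1 - p.2)]
    simp only [Function.uncurry, Real.norm_eq_abs, abs_mul, abs_abs, abs_of_nonneg (hφ0 p.2)]
    gcongr
    · exact hφ0 p.2
    · exact hM' p.1
  calc ∫ x in a..b, |f' x| * meanOscillation φ f x
      = ∫ x in a..b, ∫ y, |f' x| * |f x - f (x - y)| * φ y := by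
        simp only [meanOscillation, ← integral_const_mul, mul_assoc]
    _ = ∫ y, (∫ x in a..b, |f' x| * |f x - f (x - y)|) * φ y := by
        rw [intervalIntegral_integral_swap hprod]
        simp only [intervalIntegral.integral_mul_const]
    _ ≤ _ := by
        refine integral_le_sqrt_moment_mul_sqrt hφ0 hφ hφ1 hφm1 hφm2
          (intervalIntegral.integral_nonneg hab fun x _ => sq_nonneg _) (sq_nonneg M')
          (Real.sqrt_nonneg _)
          (fun y => mul_nonneg (intervalIntegral.integral_nonneg hab fun x _ => by positivity)
            (hφ0 y)) fun y => ?_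
        have := intervalIntegral_abs_mul_abs_sub_comp_sub_le hf hf' hM' hab y
        calc (∫ x in a..b, |f' x| * |f x - f (x - y)|) * φ y
            ≤ (√(∫ x in a..b, f' x ^ 2) *
                (|y| * √((∫ x in a..b, f' x ^ 2) + 2 * |y| * M' ^ 2))) * φ y :=
              mul_le_mul_of_nonneg_right this (hφ0 y)
          _ = _ := by ring

theorem abs_sq_div_two_add_mul_le {p v μ M M' : ℝ} (hμ : 0 ≤ μ) (hp : |p| ≤ M')
    (hv : |v| ≤ M) :
    |p ^ 2 / 2 + μ * (v ^ 2 / 2 - v ^ 3 / 3)| ≤ M' ^ 2 / 2 + μ * (M ^ 2 / 2 + M ^ 3 / 3) := by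
  have hp2 : p ^ 2 ≤ M' ^ 2 := by simpa using pow_le_pow_left₀ (abs_nonneg _) hp 2
  have hv2 : v ^ 2 ≤ M ^ 2 := by simpa using pow_le_pow_left₀ (abs_nonneg _) hv 2
  have hv3 : |v ^ 3| ≤ M ^ 3 := by simpa [abs_pow] using pow_le_pow_left₀ (abs_nonneg _) hv 3
  have hpot : |v ^ 2 / 2 - v ^ 3 / 3| ≤ M ^ 2 / 2 + M ^ 3 / 3 := by
    rw [abs_le]; constructor <;> nlinarith [abs_le.1 hv3, sq_nonneg v]
  calc |p ^ 2 / 2 + μ * (v ^ 2 / 2 - v ^ 3 / 3)|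
      ≤ |p ^ 2 / 2| + |μ * (v ^ 2 / 2 - v ^ 3 / 3)| := abs_add_le _ _
    _ ≤ M' ^ 2 / 2 + μ * (M ^ 2 / 2 + M ^ 3 / 3) := by
      rw [abs_mul, abs_of_nonneg hμ, abs_of_nonneg (by positivity)]
      gcongr

theorem abs_mul_intervalIntegral_deriv_sq_le {φ u : ℝ → ℝ} {c μ M M' : ℝ} (hφ0 : ∀ y, 0 ≤ φ y)
    (hφ : Integrable φ) (hφ1 : ∫ y, φ y = 1) (hμ : 0 ≤ μ) (hu : ContDiff ℝ 2 u)
    (hM : ∀ x, |u x| ≤ M) (hM' : ∀ x, |deriv u x| ≤ M')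
    (heq : ∀ x, -(c * deriv u x)
      = deriv (deriv u) x + μ * u x * (1 - ∫ y, u (x - y) * φ y))
    {a b : ℝ} (hab : a ≤ b) :
    |c| * ∫ x in a..b, deriv u x ^ 2 ≤ M' ^ 2 + μ * (M ^ 2 + 2 / 3 * M ^ 3) +
      μ * M * ∫ x in a..b, |deriv u x| * meanOscillation φ u x := by
  have hu1 : ContDiff ℝ 1 (deriv u) := (show ContDiff ℝ (1 + 1) u from hu).deriv'
  have hud : Differentiable ℝ u := hu.differentiable two_ne_zero
  have hu'd : Differentiable ℝ (deriv u) := hu1.differentiable one_ne_zero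
  have huc : Continuous u := hud.continuous
  have hM0 : 0 ≤ M := (abs_nonneg _).trans (hM 0)
  set P : ℝ → ℝ := fun x => deriv u x ^ 2 / 2 + μ * (u x ^ 2 / 2 - u x ^ 3 / 3)
  set P' : ℝ → ℝ := fun x =>
    deriv (deriv u) x * deriv u x + μ * (u x * deriv u x - u x ^ 2 * deriv u x)
  set Q : ℝ → ℝ := fun x => -c * deriv u x ^ 2 - P' x
  have hP : ∀ x, HasDerivAt P (P' x) x := fun x => by
    have h1 := (hud x).hasDerivAt
    have h2 := (hu'd x).hasDerivAt
    exact (((h2.pow 2).div_const 2).add ((((h1.pow 2).div_const 2).sub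
      ((h1.pow 3).div_const 3)).const_mul μ)).congr_deriv (by push_cast; ring)
  have hPb : ∀ x, |P x| ≤ M' ^ 2 / 2 + μ * (M ^ 2 / 2 + M ^ 3 / 3) := fun x =>
    abs_sq_div_two_add_mul_le hμ (hM' x) (hM x)
  have hQb : ∀ x, |Q x| ≤ μ * M * (|deriv u x| * meanOscillation φ u x) := fun x => by
    have hQ : Q x = μ * u x * deriv u x * (u x - ∫ y, u (x - y) * φ y) := by
      simp only [Q, P']; linear_combination deriv u x * heq x
    rw [hQ, abs_mul, abs_mul, abs_mul, abs_of_nonneg hμ]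
    have := abs_sub_integral_comp_sub_mul_le_meanOscillation hφ0 hφ hφ1 huc hM x
    calc μ * |u x| * |deriv u x| * |u x - ∫ y, u (x - y) * φ y|
        ≤ μ * M * |deriv u x| * meanOscillation φ u x := by gcongr; exact hM x
      _ = μ * M * (|deriv u x| * meanOscillation φ u x) := by ring
  have hQint : ∫ x in a..b, Q x = -c * (∫ x in a..b, deriv u x ^ 2) - (P b - P a) := by
    rw [intervalIntegral.integral_sub, intervalIntegral.integral_const_mul,
      intervalIntegral.integral_eq_sub_of_hasDerivAt (fun x _ => hP x)]
    all_goals exact Continuous.intervalIntegrable (by fun_prop) _ _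
  have hQabs : |∫ x in a..b, Q x| ≤
      μ * M * ∫ x in a..b, |deriv u x| * meanOscillation φ u x := by
    rw [← intervalIntegral.integral_const_mul]
    refine (intervalIntegral.abs_integral_le_integral_abs hab).trans
      (intervalIntegral.integral_mono_on hab (Continuous.intervalIntegrable (by fun_prop) _ _)
        (Continuous.intervalIntegrable ?_ _ _) fun x _ => hQb x)
    have := continuous_meanOscillation hφ huc hM
    fun_prop
  calc |c| * ∫ x in a..b, deriv u x ^ 2 = |(∫ x in a..b, Q x) + (P b - P a)| := by
        rw [hQint, sub_add_cancel, abs_mul, abs_neg, abs_of_nonneg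
          (intervalIntegral.integral_nonneg hab fun x _ => sq_nonneg (deriv u x))]
    _ ≤ |∫ x in a..b, Q x| + (|P b| + |P a|) :=
        (abs_add_le _ _).trans (add_le_add le_rfl (abs_sub _ _))
    _ ≤ _ := by linarith [hPb a, hPb b]

theorem integrable_of_forall_intervalIntegral_le {g : ℝ → ℝ} (hg : Continuous g)
    (hg0 : ∀ x, 0 ≤ g x) {K : ℝ} (hK : ∀ R, 0 ≤ R → ∫ x in -R..R, g x ≤ K) : Integrable g :=
  integrable_of_intervalIntegral_norm_bounded K (a := fun n : ℕ => -(n : ℝ)) (b := fun n => n)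
    (fun n => hg.integrableOn_Ioc)
    (tendsto_neg_atTop_atBot.comp tendsto_natCast_atTop_atTop) tendsto_natCast_atTop_atTop
    (Eventually.of_forall fun n => by
      simpa only [Real.norm_eq_abs, abs_of_nonneg (hg0 _)] using hK n n.cast_nonneg)

theorem stmt_4_general (φ u : ℝ → ℝ) (c μ : ℝ) (hμ : 0 < μ)
    (hφ0 : ∀ z, 0 ≤ φ z)
    (hφint : Integrable φ) (hφ1 : ∫ z, φ z = 1)
    (m₂ : ℝ)
    (hφm1 : Integrable (fun z => |z| * φ z))
    (hφm2 : Integrable (fun z => z ^ 2 * φ z)) (hm2 : m₂ = ∫ z, z ^ 2 * φ z)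
    (hu : ContDiff ℝ 2 u)
    (M M' : ℝ) (hM : ∀ x, |u x| ≤ M)
    (hM' : ∀ x, |deriv u x| ≤ M')
    (heq : ∀ x, -(c * deriv u x)
      = deriv (deriv u) x + μ * u x * (1 - ∫ y, u (x - y) * φ y))
    (hcond : μ * Real.sqrt m₂ * M < |c|) :
    Integrable (fun x => (deriv u x) ^ 2) := by
  subst hm2
  have hM0 : 0 ≤ M := (abs_nonneg _).trans (hM 0)
  have hm₁ : 0 ≤ ∫ z, |z| * φ z := integral_nonneg fun z => mul_nonneg (abs_nonneg z) (hφ0 z)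
  have hu' : ∀ x, HasDerivAt u (deriv u x) x :=
    fun x => (hu.differentiable two_ne_zero x).hasDerivAt
  have hu'c : Continuous (deriv u) := hu.continuous_deriv one_le_two
  set B := μ * M * √(∫ z, z ^ 2 * φ z)
  set A := M' ^ 2 + μ * (M ^ 2 + 2 / 3 * M ^ 3)
  set D := 2 * (∫ z, |z| * φ z) * M' ^ 2
  refine integrable_of_forall_intervalIntegral_le
    (K := (2 * (|c| - B) * A + B ^ 2 * D) / (|c| - B) ^ 2) (by fun_prop) (fun x => sq_nonneg _)
    fun R hR => ?_
  have hR' : -R ≤ R := by linarith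
  refine le_of_mul_le_add_mul_sqrt_mul_sqrt
    (intervalIntegral.integral_nonneg hR' fun x _ => sq_nonneg _) (by positivity) (by positivity)
    (by linarith) ?_
  have hO := intervalIntegral_abs_mul_meanOscillation_le hφ0 hφint hφ1 hφm1 hφm2 hu' hu'c
    hM hM' hR'
  calc |c| * ∫ x in -R..R, deriv u x ^ 2
      ≤ A + μ * M * ∫ x in -R..R, |deriv u x| * meanOscillation φ u x :=
        abs_mul_intervalIntegral_deriv_sq_le hφ0 hφint hφ1 hμ.le hu hM hM' heq hR'
    _ ≤ A + μ * M * (√(∫ x in -R..R, deriv u x ^ 2) * (√(∫ z, z ^ 2 * φ z) *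
          √((∫ x in -R..R, deriv u x ^ 2) + D))) := by gcongr
    _ = A + B * (√(∫ x in -R..R, deriv u x ^ 2) * √((∫ x in -R..R, deriv u x ^ 2) + D)) := by
        ring

/-- Sufficient condition for u' ∈ L². -/
theorem stmt_4 (φ u : ℝ → ℝ) (c μ : ℝ) (hc : c ≠ 0) (hμ : 0 < μ)
    (hφc : Continuous φ) (hφ0 : ∀ z, 0 ≤ φ z) (hφpos : 0 < φ 0)
    (hφint : Integrable φ) (hφ1 : ∫ z, φ z = 1)
    (m₁ m₂ : ℝ)
    (hφm1 : Integrable (fun z => |z| * φ z)) (hm1 : m₁ = ∫ z, |z| * φ z)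
    (hφm2 : Integrable (fun z => z ^ 2 * φ z)) (hm2 : m₂ = ∫ z, z ^ 2 * φ z)
    (hu : ContDiff ℝ 2 u)
    (M M' M'' : ℝ) (hM : ∀ x, |u x| ≤ M) (hMsup : M = ⨆ x, |u x|)
    (hM' : ∀ x, |deriv u x| ≤ M') (hM'' : ∀ x, |deriv (deriv u) x| ≤ M'')
    (heq : ∀ x, -(c * deriv u x)
      = deriv (deriv u) x + μ * u x * (1 - ∫ y, u (x - y) * φ y))
    (hcond : μ * Real.sqrt m₂ * M < |c|) :
    Integrable (fun x => (deriv u x) ^ 2) :=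
  stmt_4_general φ u c μ hμ hφ0 hφint hφ1 m₂ hφm1 hφm2 hm2 hu M M' hM hM' heq hcond
end
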